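/- arXiv:1910.11514 — 2 statements merged into one kernel-verified Lean document; each statement's English description precedes it below -/
import Mathlib

section
/- Let B be an n×k integer matrix and D ∈ ℤⁿ. Let B' be obtained from the block matrix [[−1, 0]; [C, B]] (where C = D − 1 entrywise, viewed as a column) by considering its cokernel with distinguished element the class of the all-ones vector of length n+1. Then (cok B', class of (1,…,1)) is isomorphic as a pointed abelian group to (cok B, class of D). -/
open Matrix

/-- cok M = ℤⁿ / (column span of M). -/
abbrev cok {n k : ℕ} (M : Matrix (Fin n) (Fin k) ℤ) :=
  (Fin n → ℤ) ⧸ LinearMap.range M.mulVecLin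

/-- Enlarging (D, B) to the matrix B' = [[−1, 0]; [D − 1, B]] does not change the pointed
cokernel: (cok B', [1]) ≅ (cok B, [D]). -/
theorem stmt1 (n k : ℕ) (B : Matrix (Fin n) (Fin k) ℤ) (D : Fin n → ℤ) :
    ∃ e : cok (Matrix.of (Fin.cons (Fin.cons (-1) (0 : Fin k → ℤ))
            (fun i => Fin.cons (D i - 1) (B i)))) ≃+ cok B,
      e (Submodule.Quotient.mk (fun _ => 1)) = Submodule.Quotient.mk D := by
  set M : Matrix (Fin (n+1)) (Fin (k+1)) ℤ :=
    Matrix.of (Fin.cons (Fin.cons (-1) (0 : Fin k → ℤ))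
      (fun i => Fin.cons (D i - 1) (B i))) with hMdef
  have hM0 : ∀ w : Fin (k+1) → ℤ, M.mulVec w 0 = -(w 0) := by
    intro w
    simp [hMdef, mulVec, dotProduct, Fin.sum_univ_succ]
  have hMs : ∀ (w : Fin (k+1) → ℤ) (i : Fin n),
      M.mulVec w i.succ = w 0 * (D i - 1) + B.mulVec (fun j => w j.succ) i := by
    intro w i
    simp [hMdef, mulVec, dotProduct, Fin.sum_univ_succ, mul_comm]
  set f : (Fin (n+1) → ℤ) →ₗ[ℤ] (Fin n → ℤ) :=
    { toFun := fun x i => x i.succ + x 0 * (D i - 1)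
      map_add' := by intro x y; funext i; simp; ring
      map_smul' := by intro c x; funext i; simp; ring } with hfdef
  have hf : ∀ (x : Fin (n+1) → ℤ) (i : Fin n), f x i = x i.succ + x 0 * (D i - 1) := by
    intro x i; rfl
  set g := (LinearMap.range B.mulVecLin).mkQ.comp f with hgdef
  have hker : LinearMap.range M.mulVecLin = LinearMap.ker g := by
    apply le_antisymm
    · rintro x ⟨w, rfl⟩
      simp only [LinearMap.mem_ker, hgdef, LinearMap.comp_apply,
        Submodule.mkQ_apply, Submodule.Quotient.mk_eq_zero]
      refine ⟨fun j => w j.succ, ?_⟩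
      funext i
      simp only [mulVecLin_apply, hf, hMs, hM0]
      ring
    · intro x hx
      simp only [LinearMap.mem_ker, hgdef, LinearMap.comp_apply,
        Submodule.mkQ_apply, Submodule.Quotient.mk_eq_zero] at hx
      obtain ⟨v, hv⟩ := hx
      refine ⟨Fin.cons (-(x 0)) v, ?_⟩
      funext i
      refine Fin.cases ?_ ?_ i
      · simp [mulVecLin_apply, hM0]
      · intro i
        have := congrFun hv i
        simp only [mulVecLin_apply, hf] at this ⊢
        rw [hMs]
        simp only [Fin.cons_zero, Fin.cons_succ]
        linarith
  have hsurj : Function.Surjective g := by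
    intro y
    obtain ⟨z, rfl⟩ := Submodule.mkQ_surjective _ y
    refine ⟨Fin.cons 0 z, ?_⟩
    simp only [hgdef, LinearMap.comp_apply, Submodule.mkQ_apply]
    congr 1
    funext i
    simp [hf]
  set L := (LinearMap.range M.mulVecLin).liftQ g hker.le with hLdef
  have hinj : Function.Injective L := by
    rw [← LinearMap.ker_eq_bot]
    exact Submodule.ker_liftQ_eq_bot _ _ _ hker.ge
  have hsurjL : Function.Surjective L := by
    intro y
    obtain ⟨x, hx⟩ := hsurj y
    exact ⟨Submodule.Quotient.mk x, hx⟩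
  refine ⟨(LinearEquiv.ofBijective L ⟨hinj, hsurjL⟩).toAddEquiv, ?_⟩
  show L (Submodule.Quotient.mk _) = _
  rw [hLdef]
  rw [Submodule.liftQ_apply]
  simp only [hgdef, LinearMap.comp_apply, Submodule.mkQ_apply]
  congr 1
  funext i
  simp [hf]
end

section
/- If two pairs (D₁, B₁) and (D₂, B₂) are GL_Γ⁺-equivalent via (U, V), then the induced map v ↦ Uv gives an isomorphism of pointed abelian groups (cok B₁•, [D₁]) ≅ (cok B₂•, [D₂]). -/
open Matrix

/-- If (D₁, B₁) and (D₂, B₂) are GL_Γ⁺-equivalent via (U, V), then v ↦ Uv induces an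
isomorphism of pointed abelian groups (cok B₁, [D₁]) ≅ (cok B₂, [D₂]). -/
theorem stmt12 (Γ : Type*) [Fintype Γ] [DecidableEq Γ] [PartialOrder Γ]
    (nn mm : Γ → ℕ)
    (D₁ D₂ : (Σ γ : Γ, Fin (nn γ)) → ℤ)
    (B₁ B₂ : Matrix (Σ γ : Γ, Fin (nn γ)) (Σ γ : Γ, Fin (mm γ)) ℤ)
    (U : Matrix (Σ γ : Γ, Fin (nn γ)) (Σ γ : Γ, Fin (nn γ)) ℤ)
    (V : Matrix (Σ γ : Γ, Fin (mm γ)) (Σ γ : Γ, Fin (mm γ)) ℤ)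
    (hUtri : ∀ x y : (Σ γ : Γ, Fin (nn γ)), ¬ x.1 ≤ y.1 → U x y = 0)
    (hVtri : ∀ x y : (Σ γ : Γ, Fin (mm γ)), ¬ x.1 ≤ y.1 → V x y = 0)
    (hU : IsUnit U) (hV : IsUnit V)
    (hB : U * B₁ = B₂ * V)
    (hD : U.mulVec D₁ - D₂ ∈ LinearMap.range B₂.mulVecLin) :
    ∃ e : (((Σ γ : Γ, Fin (nn γ)) → ℤ) ⧸ LinearMap.range B₁.mulVecLin) ≃+
          (((Σ γ : Γ, Fin (nn γ)) → ℤ) ⧸ LinearMap.range B₂.mulVecLin),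
      (∀ v : (Σ γ : Γ, Fin (nn γ)) → ℤ,
        e (Submodule.Quotient.mk v) = Submodule.Quotient.mk (U.mulVec v)) ∧
      e (Submodule.Quotient.mk D₁) = Submodule.Quotient.mk D₂ := by
  classical
  set W := hU.unit⁻¹.val with hW
  set V' := hV.unit⁻¹.val with hV'
  have hUW : U * W = 1 := hU.unit.mul_inv
  have hWU : W * U = 1 := hU.unit.inv_mul
  have hVV' : V * V' = 1 := hV.unit.mul_inv
  have hWB : W * B₂ = B₁ * V' := by
    have h : W * (U * B₁) * V' = W * (B₂ * V) * V' := by rw [hB]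
    rw [← Matrix.mul_assoc W U B₁, hWU, Matrix.one_mul] at h
    rw [← Matrix.mul_assoc W B₂ V, Matrix.mul_assoc (W * B₂) V V', hVV',
      Matrix.mul_one] at h
    exact h.symm
  have h₁ : LinearMap.range B₁.mulVecLin ≤
      (LinearMap.range B₂.mulVecLin).comap U.mulVecLin := by
    rintro _ ⟨x, rfl⟩
    simp only [Submodule.mem_comap, mulVecLin_apply, LinearMap.mem_range]
    exact ⟨V.mulVec x, by rw [mulVec_mulVec, mulVec_mulVec, hB]⟩
  have h₂ : LinearMap.range B₂.mulVecLin ≤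
      (LinearMap.range B₁.mulVecLin).comap W.mulVecLin := by
    rintro _ ⟨x, rfl⟩
    simp only [Submodule.mem_comap, mulVecLin_apply, LinearMap.mem_range]
    exact ⟨V'.mulVec x, by rw [mulVec_mulVec, mulVec_mulVec, hWB]⟩
  let f := Submodule.mapQ _ _ U.mulVecLin h₁
  let g := Submodule.mapQ _ _ W.mulVecLin h₂
  have hfg : f.comp g = LinearMap.id := by
    apply Submodule.linearMap_qext
    refine LinearMap.ext fun x => ?_
    simp [f, g, Submodule.mapQ_apply, mulVec_mulVec, hUW, one_mulVec]
  have hgf : g.comp f = LinearMap.id := by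
    apply Submodule.linearMap_qext
    refine LinearMap.ext fun x => ?_
    simp [f, g, Submodule.mapQ_apply, mulVec_mulVec, hWU, one_mulVec]
  refine ⟨(LinearEquiv.ofLinear f g hfg hgf).toAddEquiv, fun v => ?_, ?_⟩
  · rfl
  · show f (Submodule.Quotient.mk D₁) = _
    rw [Submodule.mapQ_apply, mulVecLin_apply]
    exact (Submodule.Quotient.eq _).2 hD
end
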